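/- Laurent phenomenon in type A₂: in the field F = Frac(ℚ[u₁,u₂]), define a : ℕ → F by a₁ = u₁, a₂ = u₂ and a_{k+2} = (1 + a_{k+1})/a_k for k ≥ 1. Then every a_k lies in the subring ℤ[u₁, u₂, u₁⁻¹, u₂⁻¹] of F, i.e. every a_k is an integer Laurent polynomial in u₁ and u₂. -/
import Mathlib


/-- The field `F = Frac(ℚ[u₁,u₂])` of rational functions in two variables over `ℚ`. -/
abbrev RatFuncTwo : Type := FractionRing (MvPolynomial (Fin 2) ℚ)

/-- The images `u₁, u₂` of the two variables in `F = Frac(ℚ[u₁,u₂])`. -/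
noncomputable def uVar (i : Fin 2) : RatFuncTwo :=
  algebraMap (MvPolynomial (Fin 2) ℚ) RatFuncTwo (MvPolynomial.X i)

lemma uVar_ne_zero (i : Fin 2) : uVar i ≠ 0 := by
  have : Function.Injective (algebraMap (MvPolynomial (Fin 2) ℚ) RatFuncTwo) :=
    IsFractionRing.injective _ _
  simp only [uVar, ne_eq, map_eq_zero_iff _ this]
  exact MvPolynomial.X_ne_zero i

lemma sum_ne_zero : (1 : RatFuncTwo) + uVar 0 + uVar 1 ≠ 0 := by
  have hinj : Function.Injective (algebraMap (MvPolynomial (Fin 2) ℚ) RatFuncTwo) :=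
    IsFractionRing.injective _ _
  have h : (1 : RatFuncTwo) + uVar 0 + uVar 1 =
      algebraMap (MvPolynomial (Fin 2) ℚ) RatFuncTwo (1 + MvPolynomial.X 0 + MvPolynomial.X 1) := by
    simp [uVar, map_add]
  rw [h, ne_eq, map_eq_zero_iff _ hinj]
  intro hc
  have := congrArg (MvPolynomial.coeff 0) hc
  simp [MvPolynomial.coeff_X'] at this

lemma one_add_uVar_ne_zero (i : Fin 2) : (1 : RatFuncTwo) + uVar i ≠ 0 := by
  have hinj : Function.Injective (algebraMap (MvPolynomial (Fin 2) ℚ) RatFuncTwo) :=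
    IsFractionRing.injective _ _
  have h : (1 : RatFuncTwo) + uVar i =
      algebraMap (MvPolynomial (Fin 2) ℚ) RatFuncTwo (1 + MvPolynomial.X i) := by
    simp [uVar, map_add]
  rw [h, ne_eq, map_eq_zero_iff _ hinj]
  intro hc
  have := congrArg (MvPolynomial.coeff 0) hc
  simp [MvPolynomial.coeff_X'] at this

/-- Laurent phenomenon in type `A₂`: for the exchange recurrence
`a_{k+2} = (1 + a_{k+1})/a_k` with `a₁ = u₁`, `a₂ = u₂`, every `a_k` (`k ≥ 1`)
lies in the subring `ℤ[u₁, u₂, u₁⁻¹, u₂⁻¹]` of `F`, i.e. the smallest subring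
of `F` containing `u₁`, `u₂` and their inverses. -/
theorem a2_recurrence_laurent_phenomenon (a : ℕ → RatFuncTwo)
    (h1 : a 1 = uVar 0) (h2 : a 2 = uVar 1)
    (hrec : ∀ k, 1 ≤ k → a (k + 2) = (1 + a (k + 1)) / a k) :
    ∀ k, 1 ≤ k →
      a k ∈ Subring.closure ({uVar 0, uVar 1, (uVar 0)⁻¹, (uVar 1)⁻¹} : Set RatFuncTwo) := by
  have h0 := uVar_ne_zero 0
  have hv1 := uVar_ne_zero 1
  have hs := sum_ne_zero
  have hp0 := one_add_uVar_ne_zero 0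
  have hp1 := one_add_uVar_ne_zero 1
  have h3 : a 3 = (1 + uVar 1) / uVar 0 := by
    rw [hrec 1 le_rfl, h1, h2]
  have h4 : a 4 = (1 + uVar 0 + uVar 1) / (uVar 0 * uVar 1) := by
    rw [hrec 2 (by norm_num), h3, h2]
    field_simp
    ring
  have h5 : a 5 = (1 + uVar 0) / uVar 1 := by
    rw [hrec 3 (by norm_num), h4, h3]
    field_simp
    ring
  have h6 : a 6 = uVar 0 := by
    rw [hrec 4 (by norm_num), h5, h4]
    field_simp
    ring
  have h7 : a 7 = uVar 1 := by
    rw [hrec 5 (by norm_num), h6, h5]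
    field_simp
  -- periodicity: a (k+5) = a k for k ≥ 1
  have hper : ∀ k, 1 ≤ k → a (k + 5) = a k := by
    have key : ∀ n, a (n + 1 + 5) = a (n + 1) ∧ a (n + 2 + 5) = a (n + 2) := by
      intro n
      induction n with
      | zero => exact ⟨h6.trans h1.symm, h7.trans h2.symm⟩
      | succ m ih =>
        refine ⟨ih.2, ?_⟩
        have e1 : m + 1 + 2 + 5 = (m + 1 + 5) + 2 := by ring
        have e2 : m + 1 + 5 + 1 = m + 2 + 5 := by ring
        rw [e1, hrec (m + 1 + 5) (by omega), e2, ih.2, ih.1,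
          ← hrec (m + 1) (by omega)]
    intro k hk
    obtain ⟨m, rfl⟩ := Nat.exists_eq_add_of_le hk
    simpa [Nat.add_comm 1 m] using (key m).1
  set S := Subring.closure ({uVar 0, uVar 1, (uVar 0)⁻¹, (uVar 1)⁻¹} : Set RatFuncTwo) with hS
  have hu0 : uVar 0 ∈ S := Subring.subset_closure (by simp)
  have hu1 : uVar 1 ∈ S := Subring.subset_closure (by simp)
  have hi0 : (uVar 0)⁻¹ ∈ S := Subring.subset_closure (by simp)
  have hi1 : (uVar 1)⁻¹ ∈ S := Subring.subset_closure (by simp)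
  have m1 : a 1 ∈ S := h1 ▸ hu0
  have m2 : a 2 ∈ S := h2 ▸ hu1
  have m3 : a 3 ∈ S := by
    rw [h3, div_eq_mul_inv]
    exact S.mul_mem (S.add_mem S.one_mem hu1) hi0
  have m4 : a 4 ∈ S := by
    rw [h4, div_eq_mul_inv, mul_inv]
    exact S.mul_mem (S.add_mem (S.add_mem S.one_mem hu0) hu1) (S.mul_mem hi0 hi1)
  have m5 : a 5 ∈ S := by
    rw [h5, div_eq_mul_inv]
    exact S.mul_mem (S.add_mem S.one_mem hu0) hi1
  intro k
  induction k using Nat.strong_induction_on with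
  | _ k ih =>
    intro hk
    by_cases hk5 : k ≤ 5
    · interval_cases k <;> assumption
    · have hk6 : 6 ≤ k := by omega
      have : a k = a (k - 5) := by
        have := hper (k - 5) (by omega)
        rwa [Nat.sub_add_cancel (by omega)] at this
      rw [this]
      exact ih (k - 5) (by omega) (by omega)
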